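/- arXiv:1709.09682 — 7 statements merged into one kernel-verified Lean document; each statement's English description precedes it below -/
import Mathlib

section
/- Let t1, t2, t3 : U → ℂ be differentiable functions on an open set U ⊆ ℂ solving the Darboux–Halphen system ṫ1 = t1(t2+t3) − t2t3, ṫ2 = t2(t1+t3) − t1t3, ṫ3 = t3(t1+t2) − t1t2. Define functions e2, e4, e6 : U → ℂ by requiring the polynomial identity in x: 4(x−t1)(x−t2)(x−t3) = 4(x − a1·e2)³ − a2·e4·(x − a1·e2) − a3·e6, where a1 = 2πi/12, a2 = 12·a1², a3 = 8·a1³ (equivalently: a1·e2 = (t1+t2+t3)/3, a2·e4 = 12 a1² e2² − 4(t1t2+t1t3+t2t3), a3·e6 = −4(a1 e2)³ + a2 e4 (a1 e2) + 4 t1t2t3). Then (e2, e4, e6) solves the Ramanujan system: (1/(2πi)) ė2 = (1/12)(e2² − e4), (1/(2πi)) ė4 = (1/3)(e2·e4 − e6), (1/(2πi)) ė6 = (1/2)(e2·e6 − e4²). -/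
open Complex

private lemma dh_aux2 (x y z a : ℂ) (ha : a ≠ 0) :
  1 / (12 * a) *
      ((↑2 * (x + y + z) ^ (2 - 1) *
            (x * (y + z) - y * z + (y * (x + z) - x * z) +
              (z * (x + y) - x * y)) -
          3 *
            ((x * (y + z) - y * z) * y + x * (y * (x + z) - x * z) +
                ((x * (y + z) - y * z) * z + x * (z * (x + y) - x * y)) +
              ((y * (x + z) - x * z) * z + y * (z * (x + y) - x * y)))) /
        (9 * a ^ 2)) =
    1 / 3 *
      ((x + y + z) / (3 * a) *
          (((x + y + z) ^ 2 - 3 * (x * y + x * z + y * z)) / (9 * a ^ 2)) -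
        (2 * (x + y + z) ^ 3 - 9 * ((x + y + z) * (x * y + x * z + y * z)) +
            27 * (x * y * z)) /
          (54 * a ^ 3)) := by
  field_simp [ha]
  ring_nf

private lemma dh_aux3 (x y z a : ℂ) (ha : a ≠ 0) :
  1 / (12 * a) *
      ((2 *
              (↑3 * (x + y + z) ^ (3 - 1) *
                (x * (y + z) - y * z + (y * (x + z) - x * z) +
                  (z * (x + y) - x * y))) -
            9 *
              ((x * (y + z) - y * z + (y * (x + z) - x * z) +
                    (z * (x + y) - x * y)) *
                  (x * y + x * z + y * z) +
                (x + y + z) *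
                  ((x * (y + z) - y * z) * y + x * (y * (x + z) - x * z) +
                      ((x * (y + z) - y * z) * z + x * (z * (x + y) - x * y)) +
                    ((y * (x + z) - x * z) * z + y * (z * (x + y) - x * y)))) +
          27 *
            (((x * (y + z) - y * z) * y + x * (y * (x + z) - x * z)) * z +
              x * y * (z * (x + y) - x * y))) /
        (54 * a ^ 3)) =
    1 / 2 *
      ((x + y + z) / (3 * a) *
          ((2 * (x + y + z) ^ 3 - 9 * ((x + y + z) * (x * y + x * z + y * z)) +
              27 * (x * y * z)) /
            (54 * a ^ 3)) -
        (((x + y + z) ^ 2 - 3 * (x * y + x * z + y * z)) / (9 * a ^ 2)) ^ 2) := by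
  field_simp [ha]
  ring_nf


set_option maxHeartbeats 4000000 in
/-- A solution of the Darboux–Halphen system transforms, via the polynomial identity
`4(x−t₁)(x−t₂)(x−t₃) = 4(x−a₁e₂)³ − a₂e₄(x−a₁e₂) − a₃e₆`, into a solution of the
Ramanujan system. -/
theorem darboux_halphen_to_ramanujan
    (U : Set ℂ) (hU : IsOpen U)
    (t1 t2 t3 e2 e4 e6 : ℂ → ℂ)
    (ht1 : DifferentiableOn ℂ t1 U)
    (ht2 : DifferentiableOn ℂ t2 U)
    (ht3 : DifferentiableOn ℂ t3 U)
    (hDH1 : ∀ τ ∈ U, deriv t1 τ = t1 τ * (t2 τ + t3 τ) - t2 τ * t3 τ)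
    (hDH2 : ∀ τ ∈ U, deriv t2 τ = t2 τ * (t1 τ + t3 τ) - t1 τ * t3 τ)
    (hDH3 : ∀ τ ∈ U, deriv t3 τ = t3 τ * (t1 τ + t2 τ) - t1 τ * t2 τ)
    (a1 a2 a3 : ℂ)
    (ha1 : a1 = 2 * (Real.pi : ℂ) * I / 12)
    (ha2 : a2 = 12 * a1^2)
    (ha3 : a3 = 8 * a1^3)
    (hdef : ∀ τ ∈ U, ∀ x : ℂ,
      4 * (x - t1 τ) * (x - t2 τ) * (x - t3 τ) =
        4 * (x - a1 * e2 τ)^3 - a2 * e4 τ * (x - a1 * e2 τ) - a3 * e6 τ) :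
    ∀ τ ∈ U,
      (1 / (2 * (Real.pi : ℂ) * I)) * deriv e2 τ = (1/12) * ((e2 τ)^2 - e4 τ) ∧
      (1 / (2 * (Real.pi : ℂ) * I)) * deriv e4 τ = (1/3) * (e2 τ * e4 τ - e6 τ) ∧
      (1 / (2 * (Real.pi : ℂ) * I)) * deriv e6 τ = (1/2) * (e2 τ * e6 τ - (e4 τ)^2) := by
  subst ha2 ha3
  have hπ : (Real.pi : ℂ) ≠ 0 := Complex.ofReal_ne_zero.mpr Real.pi_ne_zero
  have ha1ne : a1 ≠ 0 := by
    rw [ha1]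
    exact div_ne_zero (mul_ne_zero (mul_ne_zero two_ne_zero hπ) I_ne_zero) (by norm_num)
  -- multiplicative forms of the coefficient identities
  have he2m : ∀ σ ∈ U, 3 * a1 * e2 σ = t1 σ + t2 σ + t3 σ := by
    intro σ hσ
    have h0 := hdef σ hσ 0
    have h1 := hdef σ hσ 1
    have hm := hdef σ hσ (-1)
    linear_combination (h1 + hm - 2*h0)/8
  have he4m : ∀ σ ∈ U, 9 * a1^2 * e4 σ =
      (t1 σ + t2 σ + t3 σ)^2 - 3*(t1 σ * t2 σ + t1 σ * t3 σ + t2 σ * t3 σ) := by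
    intro σ hσ
    have h1 := hdef σ hσ 1
    have hm := hdef σ hσ (-1)
    have h2 := he2m σ hσ
    linear_combination (3/8)*(h1 - hm) + (3*a1*e2 σ + (t1 σ + t2 σ + t3 σ))*h2
  have he6m : ∀ σ ∈ U, 54 * a1^3 * e6 σ =
      2*(t1 σ + t2 σ + t3 σ)^3
        - 9*((t1 σ + t2 σ + t3 σ)*(t1 σ * t2 σ + t1 σ * t3 σ + t2 σ * t3 σ))
        + 27*(t1 σ * t2 σ * t3 σ) := by
    intro σ hσ
    have h0 := hdef σ hσ 0
    have h2 := he2m σ hσ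
    have h4 := he4m σ hσ
    linear_combination (27/4)*h0 + (9*a1*e2 σ)*h4
      - ((3*a1*e2 σ - (t1 σ + t2 σ + t3 σ))*(3*a1*e2 σ + 2*(t1 σ + t2 σ + t3 σ))
          + 9*(t1 σ * t2 σ + t1 σ * t3 σ + t2 σ * t3 σ))*h2
  intro τ hτ
  have hmem : U ∈ nhds τ := hU.mem_nhds hτ
  -- derivatives of t's at τ
  have hd1 : HasDerivAt t1 (t1 τ * (t2 τ + t3 τ) - t2 τ * t3 τ) τ := by
    have := (ht1.differentiableAt hmem).hasDerivAt
    rwa [hDH1 τ hτ] at this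
  have hd2 : HasDerivAt t2 (t2 τ * (t1 τ + t3 τ) - t1 τ * t3 τ) τ := by
    have := (ht2.differentiableAt hmem).hasDerivAt
    rwa [hDH2 τ hτ] at this
  have hd3 : HasDerivAt t3 (t3 τ * (t1 τ + t2 τ) - t1 τ * t2 τ) τ := by
    have := (ht3.differentiableAt hmem).hasDerivAt
    rwa [hDH3 τ hτ] at this
  obtain ⟨d1, hd1, hd1v⟩ : ∃ d, HasDerivAt t1 d τ ∧ d = t1 τ * (t2 τ + t3 τ) - t2 τ * t3 τ :=
    ⟨_, hd1, rfl⟩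
  obtain ⟨d2, hd2, hd2v⟩ : ∃ d, HasDerivAt t2 d τ ∧ d = t2 τ * (t1 τ + t3 τ) - t1 τ * t3 τ :=
    ⟨_, hd2, rfl⟩
  obtain ⟨d3, hd3, hd3v⟩ : ∃ d, HasDerivAt t3 d τ ∧ d = t3 τ * (t1 τ + t2 τ) - t1 τ * t2 τ :=
    ⟨_, hd3, rfl⟩
  -- elementary symmetric functions
  have hs1 : HasDerivAt (fun σ => t1 σ + t2 σ + t3 σ) (d1 + d2 + d3) τ :=
    (hd1.add hd2).add hd3
  have hs2 : HasDerivAt (fun σ => t1 σ * t2 σ + t1 σ * t3 σ + t2 σ * t3 σ)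
      ((d1 * t2 τ + t1 τ * d2) + (d1 * t3 τ + t1 τ * d3) + (d2 * t3 τ + t2 τ * d3)) τ :=
    ((hd1.mul hd2).add (hd1.mul hd3)).add (hd2.mul hd3)
  have hs3 : HasDerivAt (fun σ => t1 σ * t2 σ * t3 σ)
      ((d1 * t2 τ + t1 τ * d2) * t3 τ + t1 τ * t2 τ * d3) τ :=
    (hd1.mul hd2).mul hd3
  -- division forms of the coefficient identities
  have hdiv2 : ∀ σ ∈ U, e2 σ = (t1 σ + t2 σ + t3 σ) / (3 * a1) := by
    intro σ hσ
    rw [eq_div_iff (by simp [ha1ne])]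
    linear_combination he2m σ hσ
  have hdiv4 : ∀ σ ∈ U, e4 σ =
      ((t1 σ + t2 σ + t3 σ)^2 - 3*(t1 σ * t2 σ + t1 σ * t3 σ + t2 σ * t3 σ)) / (9 * a1^2) := by
    intro σ hσ
    rw [eq_div_iff (by simp [ha1ne])]
    linear_combination he4m σ hσ
  have hdiv6 : ∀ σ ∈ U, e6 σ =
      (2*(t1 σ + t2 σ + t3 σ)^3
        - 9*((t1 σ + t2 σ + t3 σ)*(t1 σ * t2 σ + t1 σ * t3 σ + t2 σ * t3 σ))
        + 27*(t1 σ * t2 σ * t3 σ)) / (54 * a1^3) := by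
    intro σ hσ
    rw [eq_div_iff (by simp [ha1ne])]
    linear_combination he6m σ hσ
  -- derivatives of e2, e4, e6 at τ
  have hev2 : e2 =ᶠ[nhds τ] fun σ => (t1 σ + t2 σ + t3 σ) / (3 * a1) := by
    filter_upwards [hmem] with σ hσ using hdiv2 σ hσ
  have hev4 : e4 =ᶠ[nhds τ] fun σ =>
      ((t1 σ + t2 σ + t3 σ)^2 - 3*(t1 σ * t2 σ + t1 σ * t3 σ + t2 σ * t3 σ)) / (9 * a1^2) := by
    filter_upwards [hmem] with σ hσ using hdiv4 σ hσ
  have hev6 : e6 =ᶠ[nhds τ] fun σ =>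
      (2*(t1 σ + t2 σ + t3 σ)^3
        - 9*((t1 σ + t2 σ + t3 σ)*(t1 σ * t2 σ + t1 σ * t3 σ + t2 σ * t3 σ))
        + 27*(t1 σ * t2 σ * t3 σ)) / (54 * a1^3) := by
    filter_upwards [hmem] with σ hσ using hdiv6 σ hσ
  have hF2 : HasDerivAt (fun σ => (t1 σ + t2 σ + t3 σ) / (3 * a1))
      ((d1 + d2 + d3) / (3 * a1)) τ := hs1.div_const _
  have hF4 := ((hs1.pow 2).sub (hs2.const_mul 3)).div_const (9 * a1^2)
  have hF6 := ((((hs1.pow 3).const_mul 2).sub ((hs1.mul hs2).const_mul 9)).add (hs3.const_mul 27)).div_const (54 * a1^3)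
  have hde2 := hev2.deriv_eq.trans hF2.deriv
  have hde4 := hev4.deriv_eq.trans hF4.deriv
  have hde6 := hev6.deriv_eq.trans hF6.deriv
  have h2pi : 2 * (Real.pi : ℂ) * I = 12 * a1 := by rw [ha1]; ring
  refine ⟨?_, ?_, ?_⟩
  · rw [hde2, hdiv2 τ hτ, hdiv4 τ hτ, h2pi, hd1v, hd2v, hd3v]
    field_simp [ha1ne]
    ring
  · rw [hde4, hdiv2 τ hτ, hdiv4 τ hτ, hdiv6 τ hτ, h2pi, hd1v, hd2v, hd3v]
    exact dh_aux2 (t1 τ) (t2 τ) (t3 τ) a1 ha1ne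
  · rw [hde6, hdiv2 τ hτ, hdiv4 τ hτ, hdiv6 τ hτ, h2pi, hd1v, hd2v, hd3v]
    exact dh_aux3 (t1 τ) (t2 τ) (t3 τ) a1 ha1ne
end

section
/- Let t1, t2, t3 : U → ℂ be three-times differentiable functions on an open set U ⊆ ℂ solving the Darboux–Halphen system ṫ1 = t1(t2+t3) − t2t3, ṫ2 = t2(t1+t3) − t1t3, ṫ3 = t3(t1+t2) − t1t2. Then γ := (2/3)(t1 + t2 + t3) satisfies the Chazy equation γ''' = 6 γ γ'' − 9 (γ')² on U. -/
open Complex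

/-- If t₁, t₂, t₃ solve the Darboux–Halphen system, then γ = (2/3)(t₁+t₂+t₃) solves
the Chazy equation γ''' = 6γγ'' − 9(γ')². -/
theorem darboux_halphen_to_chazy
    (U : Set ℂ) (hU : IsOpen U)
    (t1 t2 t3 : ℂ → ℂ)
    (ht1 : DifferentiableOn ℂ t1 U)
    (ht1' : DifferentiableOn ℂ (deriv t1) U)
    (ht1'' : DifferentiableOn ℂ (deriv (deriv t1)) U)
    (ht2 : DifferentiableOn ℂ t2 U)
    (ht2' : DifferentiableOn ℂ (deriv t2) U)
    (ht2'' : DifferentiableOn ℂ (deriv (deriv t2)) U)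
    (ht3 : DifferentiableOn ℂ t3 U)
    (ht3' : DifferentiableOn ℂ (deriv t3) U)
    (ht3'' : DifferentiableOn ℂ (deriv (deriv t3)) U)
    (hDH1 : ∀ τ ∈ U, deriv t1 τ = t1 τ * (t2 τ + t3 τ) - t2 τ * t3 τ)
    (hDH2 : ∀ τ ∈ U, deriv t2 τ = t2 τ * (t1 τ + t3 τ) - t1 τ * t3 τ)
    (hDH3 : ∀ τ ∈ U, deriv t3 τ = t3 τ * (t1 τ + t2 τ) - t1 τ * t2 τ)
    (γ : ℂ → ℂ) (hγ : ∀ τ, γ τ = (2/3) * (t1 τ + t2 τ + t3 τ)) :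
    ∀ τ ∈ U,
      iteratedDeriv 3 γ τ = 6 * γ τ * iteratedDeriv 2 γ τ - 9 * (deriv γ τ)^2 := by

  have hm : ∀ {x : ℂ}, x ∈ U → U ∈ nhds x := fun hx => hU.mem_nhds hx
  have H1 : ∀ x ∈ U, HasDerivAt t1 (deriv t1 x) x :=
    fun x hx => (ht1.differentiableAt (hm hx)).hasDerivAt
  have H2 : ∀ x ∈ U, HasDerivAt t2 (deriv t2 x) x :=
    fun x hx => (ht2.differentiableAt (hm hx)).hasDerivAt
  have H3 : ∀ x ∈ U, HasDerivAt t3 (deriv t3 x) x :=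
    fun x hx => (ht3.differentiableAt (hm hx)).hasDerivAt
  have hγfun : γ = fun y => (2/3 : ℂ) * (t1 y + t2 y + t3 y) := funext hγ
  -- first derivative
  have step1 : ∀ x ∈ U, deriv γ x
      = 2/3 * (t1 x * t2 x + t1 x * t3 x + t2 x * t3 x) := by
    intro x hx
    have key : HasDerivAt γ (2/3 * (deriv t1 x + deriv t2 x + deriv t3 x)) x := by
      rw [hγfun]
      exact (((H1 x hx).add (H2 x hx)).add (H3 x hx)).const_mul (2/3)
    rw [key.deriv, hDH1 x hx, hDH2 x hx, hDH3 x hx]; ring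
  -- second derivative
  have step2 : ∀ x ∈ U, deriv (deriv γ) x = 4 * (t1 x * t2 x * t3 x) := by
    intro x hx
    have hev : deriv γ =ᶠ[nhds x]
        fun y => 2/3 * (t1 y * t2 y + t1 y * t3 y + t2 y * t3 y) :=
      Filter.eventuallyEq_of_mem (hm hx) step1
    rw [hev.deriv_eq]
    have key : HasDerivAt
        (fun y => (2/3 : ℂ) * (t1 y * t2 y + t1 y * t3 y + t2 y * t3 y))
        (2/3 * ((deriv t1 x * t2 x + t1 x * deriv t2 x)
          + (deriv t1 x * t3 x + t1 x * deriv t3 x)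
          + (deriv t2 x * t3 x + t2 x * deriv t3 x))) x :=
      ((((H1 x hx).mul (H2 x hx)).add ((H1 x hx).mul (H3 x hx))).add
        ((H2 x hx).mul (H3 x hx))).const_mul (2/3)
    rw [key.deriv, hDH1 x hx, hDH2 x hx, hDH3 x hx]; ring
  -- third derivative
  intro τ hτ
  have step3 : deriv (deriv (deriv γ)) τ
      = 4 * ((deriv t1 τ * t2 τ + t1 τ * deriv t2 τ) * t3 τ
        + t1 τ * t2 τ * deriv t3 τ) := by
    have hev : deriv (deriv γ) =ᶠ[nhds τ] fun y => 4 * (t1 y * t2 y * t3 y) :=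
      Filter.eventuallyEq_of_mem (hm hτ) step2
    rw [hev.deriv_eq]
    have key : HasDerivAt (fun y => (4 : ℂ) * (t1 y * t2 y * t3 y))
        (4 * ((deriv t1 τ * t2 τ + t1 τ * deriv t2 τ) * t3 τ
          + t1 τ * t2 τ * deriv t3 τ)) τ :=
      (((H1 τ hτ).mul (H2 τ hτ)).mul (H3 τ hτ)).const_mul 4
    exact key.deriv
  have h3 : iteratedDeriv 3 γ τ = deriv (deriv (deriv γ)) τ := by
    simp [iteratedDeriv_succ, iteratedDeriv_zero]
  have h2 : iteratedDeriv 2 γ τ = deriv (deriv γ) τ := by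
    simp [iteratedDeriv_succ, iteratedDeriv_zero]
  rw [h3, h2, step3, hDH1 τ hτ, hDH2 τ hτ, hDH3 τ hτ, step2 τ hτ, step1 τ hτ, hγ τ]
  ring
end

section
/- Let t1, t2, t3 : U → ℂ be twice differentiable functions on an open set U ⊆ ℂ solving the Darboux–Halphen system, and set γ := (2/3)(t1 + t2 + t3). Then t1t2 + t1t3 + t2t3 = (3/2) γ' and t1 t2 t3 = (1/4) γ'' on U; consequently, for each i, the function t_i is a root of the cubic y³ − (3/2) γ y² + (3/2) γ' y − (1/4) γ'' = 0. -/
open Complex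

/-- If t₁, t₂, t₃ solve the Darboux–Halphen system and γ = (2/3)(t₁+t₂+t₃), then
t₁t₂ + t₁t₃ + t₂t₃ = (3/2)γ' and t₁t₂t₃ = (1/4)γ''; consequently each tᵢ is a root of
y³ − (3/2)γy² + (3/2)γ'y − (1/4)γ'' = 0. -/
theorem darboux_halphen_roots_of_cubic
    (U : Set ℂ) (hU : IsOpen U)
    (t1 t2 t3 : ℂ → ℂ)
    (ht1 : DifferentiableOn ℂ t1 U)
    (ht1' : DifferentiableOn ℂ (deriv t1) U)
    (ht2 : DifferentiableOn ℂ t2 U)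
    (ht2' : DifferentiableOn ℂ (deriv t2) U)
    (ht3 : DifferentiableOn ℂ t3 U)
    (ht3' : DifferentiableOn ℂ (deriv t3) U)
    (hDH1 : ∀ τ ∈ U, deriv t1 τ = t1 τ * (t2 τ + t3 τ) - t2 τ * t3 τ)
    (hDH2 : ∀ τ ∈ U, deriv t2 τ = t2 τ * (t1 τ + t3 τ) - t1 τ * t3 τ)
    (hDH3 : ∀ τ ∈ U, deriv t3 τ = t3 τ * (t1 τ + t2 τ) - t1 τ * t2 τ)
    (γ : ℂ → ℂ) (hγ : ∀ τ, γ τ = (2/3) * (t1 τ + t2 τ + t3 τ)) :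
    ∀ τ ∈ U,
      (t1 τ * t2 τ + t1 τ * t3 τ + t2 τ * t3 τ = (3/2) * deriv γ τ) ∧
      (t1 τ * t2 τ * t3 τ = (1/4) * iteratedDeriv 2 γ τ) ∧
      ((t1 τ)^3 - (3/2) * γ τ * (t1 τ)^2 + (3/2) * deriv γ τ * t1 τ
          - (1/4) * iteratedDeriv 2 γ τ = 0) ∧
      ((t2 τ)^3 - (3/2) * γ τ * (t2 τ)^2 + (3/2) * deriv γ τ * t2 τ
          - (1/4) * iteratedDeriv 2 γ τ = 0) ∧
      ((t3 τ)^3 - (3/2) * γ τ * (t3 τ)^2 + (3/2) * deriv γ τ * t3 τ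
          - (1/4) * iteratedDeriv 2 γ τ = 0) := by
  -- first derivative of γ at points of U
  have hdγ : ∀ τ ∈ U, deriv γ τ
      = (2/3) * (deriv t1 τ + deriv t2 τ + deriv t3 τ) := by
    intro τ hτ
    have hmem : U ∈ nhds τ := hU.mem_nhds hτ
    have h1 := (ht1.differentiableAt hmem).hasDerivAt
    have h2 := (ht2.differentiableAt hmem).hasDerivAt
    have h3 := (ht3.differentiableAt hmem).hasDerivAt
    have : HasDerivAt γ ((2/3) * (deriv t1 τ + deriv t2 τ + deriv t3 τ)) τ := by
      have := ((h1.add h2).add h3).const_mul ((2:ℂ)/3)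
      exact this.congr_of_eventuallyEq (Filter.Eventually.of_forall fun x => hγ x)
    exact this.deriv
  -- second derivatives of the tᵢ at points of U
  have hd2 : ∀ τ ∈ U,
      deriv (deriv t1) τ = deriv t1 τ * (t2 τ + t3 τ) + t1 τ * (deriv t2 τ + deriv t3 τ)
          - (deriv t2 τ * t3 τ + t2 τ * deriv t3 τ) ∧
      deriv (deriv t2) τ = deriv t2 τ * (t1 τ + t3 τ) + t2 τ * (deriv t1 τ + deriv t3 τ)
          - (deriv t1 τ * t3 τ + t1 τ * deriv t3 τ) ∧
      deriv (deriv t3) τ = deriv t3 τ * (t1 τ + t2 τ) + t3 τ * (deriv t1 τ + deriv t2 τ)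
          - (deriv t1 τ * t2 τ + t1 τ * deriv t2 τ) := by
    intro τ hτ
    have hmem : U ∈ nhds τ := hU.mem_nhds hτ
    have h1 := (ht1.differentiableAt hmem).hasDerivAt
    have h2 := (ht2.differentiableAt hmem).hasDerivAt
    have h3 := (ht3.differentiableAt hmem).hasDerivAt
    refine ⟨?_, ?_, ?_⟩
    · have : HasDerivAt (deriv t1) _ τ :=
        ((h1.mul (h2.add h3)).sub (h2.mul h3)).congr_of_eventuallyEq
          (Filter.eventually_of_mem hmem hDH1)
      exact this.deriv
    · have : HasDerivAt (deriv t2) _ τ :=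
        ((h2.mul (h1.add h3)).sub (h1.mul h3)).congr_of_eventuallyEq
          (Filter.eventually_of_mem hmem hDH2)
      exact this.deriv
    · have : HasDerivAt (deriv t3) _ τ :=
        ((h3.mul (h1.add h2)).sub (h1.mul h2)).congr_of_eventuallyEq
          (Filter.eventually_of_mem hmem hDH3)
      exact this.deriv
  -- second derivative of γ
  have hd2γ : ∀ τ ∈ U, iteratedDeriv 2 γ τ
      = (2/3) * (deriv (deriv t1) τ + deriv (deriv t2) τ + deriv (deriv t3) τ) := by
    intro τ hτ
    have hmem : U ∈ nhds τ := hU.mem_nhds hτ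
    have h1 := (ht1'.differentiableAt hmem).hasDerivAt
    have h2 := (ht2'.differentiableAt hmem).hasDerivAt
    have h3 := (ht3'.differentiableAt hmem).hasDerivAt
    have hc : HasDerivAt (deriv γ)
        ((2/3) * (deriv (deriv t1) τ + deriv (deriv t2) τ + deriv (deriv t3) τ)) τ := by
      have := ((h1.add h2).add h3).const_mul ((2:ℂ)/3)
      exact this.congr_of_eventuallyEq (Filter.eventually_of_mem hmem hdγ)
    rw [iteratedDeriv_succ, iteratedDeriv_one]
    exact hc.deriv
  intro τ hτ
  have e1 := hDH1 τ hτ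
  have e2 := hDH2 τ hτ
  have e3 := hDH3 τ hτ
  have hA : t1 τ * t2 τ + t1 τ * t3 τ + t2 τ * t3 τ = (3/2) * deriv γ τ := by
    rw [hdγ τ hτ, e1, e2, e3]; ring
  have hB : t1 τ * t2 τ * t3 τ = (1/4) * iteratedDeriv 2 γ τ := by
    obtain ⟨d1, d2, d3⟩ := hd2 τ hτ
    rw [hd2γ τ hτ, d1, d2, d3, e1, e2, e3]; ring
  refine ⟨hA, hB, ?_, ?_, ?_⟩ <;>
  · rw [← hA, ← hB, hγ τ]; ring
end

section
/- Let c1, c2, c3 : I → ℝ be differentiable positive functions on an open interval I ⊆ ℝ satisfying, for every cyclic permutation (i, j, k) of (1, 2, 3), the self-duality equations d/dr (log c_i²) = −2 (c_j² + c_k² − c_i² − 2 c_j c_k). Define Ω_i := 2 c_j c_k for each cyclic permutation (i, j, k). Then Ω1, Ω2, Ω3 satisfy the classical Darboux–Halphen system: Ω̇_i = Ω_i(Ω_j + Ω_k) − Ω_j Ω_k for every cyclic permutation (i, j, k), equivalently Ω̇_i + Ω̇_j = 2 Ω_i Ω_j for all i ≠ j. -/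
/-!
Since `(log c²)' = 2 ċ / c`, the self-duality equations say `ċᵢ = cᵢ (cᵢ² + 2 cⱼ cₖ - cⱼ² - cₖ²)`.
Differentiating `Ωᵢ = 2 cⱼ cₖ` with the product rule and substituting these expressions gives
the Darboux–Halphen equations by a polynomial identity; adding two of them gives `Ω̇ᵢ + Ω̇ⱼ = 2 Ωᵢ Ωⱼ`.
-/

open Real

theorem hasDerivAt_of_deriv_log_sq_eq {c : ℝ → ℝ} {r q : ℝ} (hc : DifferentiableAt ℝ c r)
    (hr : c r ≠ 0) (h : deriv (fun s => log (c s ^ 2)) r = 2 * q) :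
    HasDerivAt c (c r * q) r := by
  have hlog : deriv (fun s => log (c s ^ 2)) r = 2 * c r ^ 1 * deriv c r / c r ^ 2 :=
    ((hc.hasDerivAt.pow 2).log (pow_ne_zero 2 hr)).deriv
  rw [hlog] at h
  field_simp at h
  exact h ▸ hc.hasDerivAt

theorem hasDerivAt_two_mul_mul_of_self_dual {a b c : ℝ → ℝ} {r : ℝ}
    (hb : HasDerivAt b (b r * (b r ^ 2 + 2 * (c r * a r) - c r ^ 2 - a r ^ 2)) r)
    (hc : HasDerivAt c (c r * (c r ^ 2 + 2 * (a r * b r) - a r ^ 2 - b r ^ 2)) r) :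
    HasDerivAt (fun s => 2 * (b s * c s))
      (2 * (b r * c r) * (2 * (c r * a r) + 2 * (a r * b r))
        - 2 * (c r * a r) * (2 * (a r * b r))) r :=
  ((hb.mul hc).const_mul 2).congr_deriv (by ring)

/-- The curvature-wise self-duality equations for the Bianchi IX metric coefficients
c₁, c₂, c₃ imply that Ωᵢ = 2cⱼcₖ satisfy the classical Darboux–Halphen system,
equivalently Ω̇ᵢ + Ω̇ⱼ = 2ΩᵢΩⱼ. -/
theorem bianchi_IX_self_duality_to_darboux_halphen
    (I : Set ℝ) (hI : IsOpen I)
    (c1 c2 c3 : ℝ → ℝ)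
    (hc1 : DifferentiableOn ℝ c1 I)
    (hc2 : DifferentiableOn ℝ c2 I)
    (hc3 : DifferentiableOn ℝ c3 I)
    (hc1pos : ∀ r ∈ I, 0 < c1 r)
    (hc2pos : ∀ r ∈ I, 0 < c2 r)
    (hc3pos : ∀ r ∈ I, 0 < c3 r)
    (hsd1 : ∀ r ∈ I, deriv (fun s => Real.log ((c1 s)^2)) r =
      -2 * ((c2 r)^2 + (c3 r)^2 - (c1 r)^2 - 2 * (c2 r * c3 r)))
    (hsd2 : ∀ r ∈ I, deriv (fun s => Real.log ((c2 s)^2)) r =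
      -2 * ((c3 r)^2 + (c1 r)^2 - (c2 r)^2 - 2 * (c3 r * c1 r)))
    (hsd3 : ∀ r ∈ I, deriv (fun s => Real.log ((c3 s)^2)) r =
      -2 * ((c1 r)^2 + (c2 r)^2 - (c3 r)^2 - 2 * (c1 r * c2 r)))
    (Ω1 Ω2 Ω3 : ℝ → ℝ)
    (hΩ1 : ∀ r, Ω1 r = 2 * (c2 r * c3 r))
    (hΩ2 : ∀ r, Ω2 r = 2 * (c3 r * c1 r))
    (hΩ3 : ∀ r, Ω3 r = 2 * (c1 r * c2 r)) :
    ∀ r ∈ I,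
      (deriv Ω1 r = Ω1 r * (Ω2 r + Ω3 r) - Ω2 r * Ω3 r) ∧
      (deriv Ω2 r = Ω2 r * (Ω3 r + Ω1 r) - Ω3 r * Ω1 r) ∧
      (deriv Ω3 r = Ω3 r * (Ω1 r + Ω2 r) - Ω1 r * Ω2 r) ∧
      (deriv Ω1 r + deriv Ω2 r = 2 * (Ω1 r * Ω2 r)) ∧
      (deriv Ω2 r + deriv Ω3 r = 2 * (Ω2 r * Ω3 r)) ∧
      (deriv Ω1 r + deriv Ω3 r = 2 * (Ω1 r * Ω3 r)) := by
  intro r hr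
  have hdiff {c : ℝ → ℝ} (hc : DifferentiableOn ℝ c I) : DifferentiableAt ℝ c r :=
    (hc r hr).differentiableAt (hI.mem_nhds hr)
  have hdc1 := hasDerivAt_of_deriv_log_sq_eq (hdiff hc1) (hc1pos r hr).ne'
    (q := c1 r ^ 2 + 2 * (c2 r * c3 r) - c2 r ^ 2 - c3 r ^ 2) (by rw [hsd1 r hr]; ring)
  have hdc2 := hasDerivAt_of_deriv_log_sq_eq (hdiff hc2) (hc2pos r hr).ne'
    (q := c2 r ^ 2 + 2 * (c3 r * c1 r) - c3 r ^ 2 - c1 r ^ 2) (by rw [hsd2 r hr]; ring)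
  have hdc3 := hasDerivAt_of_deriv_log_sq_eq (hdiff hc3) (hc3pos r hr).ne'
    (q := c3 r ^ 2 + 2 * (c1 r * c2 r) - c1 r ^ 2 - c2 r ^ 2) (by rw [hsd3 r hr]; ring)
  rw [funext hΩ1, funext hΩ2, funext hΩ3]
  have hdΩ1 := (hasDerivAt_two_mul_mul_of_self_dual hdc2 hdc3).deriv
  have hdΩ2 := (hasDerivAt_two_mul_mul_of_self_dual hdc3 hdc1).deriv
  have hdΩ3 := (hasDerivAt_two_mul_mul_of_self_dual hdc1 hdc2).deriv
  refine ⟨hdΩ1, hdΩ2, hdΩ3, ?_, ?_, ?_⟩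
  · linear_combination hdΩ1 + hdΩ2
  · linear_combination hdΩ2 + hdΩ3
  · linear_combination hdΩ1 + hdΩ3
end

section
/- Let A1, A2, A3 : I → ℂ be differentiable functions on an open set I solving the Darboux–Halphen system ∂_t A_i = −A_j A_k + A_i(A_j + A_k) for every cyclic permutation (i, j, k) of (1, 2, 3). Fix q0 such that t + q0 ≠ 0 on I, and define Ω_i(t) := 1/(t + q0) + A_i(t). Then Ω1, Ω2, Ω3 satisfy the coupled linear system ∂_t Ω_i = −Ω_j Ω_k + Ω_i (A_j + A_k) for every cyclic permutation (i, j, k) of (1, 2, 3). -/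
/-!
The function `u t = (t + q₀)⁻¹` solves the Riccati equation `u' = -u²`. Adding `u` to a
solution of the Darboux–Halphen system adds `-u²` to each `∂ₜAᵢ`, while on the right-hand side
`-(u + Aⱼ)(u + Aₖ) + (u + Aᵢ)(Aⱼ + Aₖ)` the terms linear in `u` cancel and leave exactly `-u²`.
-/

variable {𝕜 : Type*} [NontriviallyNormedField 𝕜]

theorem hasDerivAt_inv_add_const {q t : 𝕜} (ht : t + q ≠ 0) :
    HasDerivAt (fun s => (s + q)⁻¹) (-((t + q)⁻¹ ^ 2)) t := by
  simpa [inv_pow, neg_div] using ((hasDerivAt_id t).add_const q).fun_inv ht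

theorem HasDerivAt.riccati_add_halphen {u A : 𝕜 → 𝕜} {t b c : 𝕜}
    (hu : HasDerivAt u (-(u t ^ 2)) t) (hA : HasDerivAt A (-(b * c) + A t * (b + c)) t) :
    HasDerivAt (fun s => u s + A s) (-((u t + b) * (u t + c)) + (u t + A t) * (b + c)) t :=
  (hu.add hA).congr_deriv (by ring)

/-- If A₁, A₂, A₃ solve the Darboux–Halphen system and Ωᵢ(t) = 1/(t+q₀) + Aᵢ(t), then
the Ωᵢ satisfy the coupled system ∂ₜΩᵢ = −ΩⱼΩₖ + Ωᵢ(Aⱼ + Aₖ). -/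
theorem darboux_halphen_shifted_solution
    (I : Set ℂ) (hI : IsOpen I)
    (A1 A2 A3 : ℂ → ℂ)
    (hA1 : DifferentiableOn ℂ A1 I)
    (hA2 : DifferentiableOn ℂ A2 I)
    (hA3 : DifferentiableOn ℂ A3 I)
    (hDH1 : ∀ t ∈ I, deriv A1 t = -(A2 t * A3 t) + A1 t * (A2 t + A3 t))
    (hDH2 : ∀ t ∈ I, deriv A2 t = -(A3 t * A1 t) + A2 t * (A3 t + A1 t))
    (hDH3 : ∀ t ∈ I, deriv A3 t = -(A1 t * A2 t) + A3 t * (A1 t + A2 t))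
    (q0 : ℂ) (hq0 : ∀ t ∈ I, t + q0 ≠ 0)
    (Ω1 Ω2 Ω3 : ℂ → ℂ)
    (hΩ1 : ∀ t, Ω1 t = (t + q0)⁻¹ + A1 t)
    (hΩ2 : ∀ t, Ω2 t = (t + q0)⁻¹ + A2 t)
    (hΩ3 : ∀ t, Ω3 t = (t + q0)⁻¹ + A3 t) :
    ∀ t ∈ I,
      (deriv Ω1 t = -(Ω2 t * Ω3 t) + Ω1 t * (A2 t + A3 t)) ∧
      (deriv Ω2 t = -(Ω3 t * Ω1 t) + Ω2 t * (A3 t + A1 t)) ∧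
      (deriv Ω3 t = -(Ω1 t * Ω2 t) + Ω3 t * (A1 t + A2 t)) := by
  intro t ht
  have hasDerivAt_of_deriv {A : ℂ → ℂ} {a : ℂ} (hA : DifferentiableOn ℂ A I)
      (h : deriv A t = a) : HasDerivAt A a t :=
    h ▸ (hA.differentiableAt (hI.mem_nhds ht)).hasDerivAt
  have hu := hasDerivAt_inv_add_const (hq0 t ht)
  obtain rfl : Ω1 = fun s => (s + q0)⁻¹ + A1 s := funext hΩ1
  obtain rfl : Ω2 = fun s => (s + q0)⁻¹ + A2 s := funext hΩ2
  obtain rfl : Ω3 = fun s => (s + q0)⁻¹ + A3 s := funext hΩ3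
  exact ⟨(hu.riccati_add_halphen (hasDerivAt_of_deriv hA1 (hDH1 t ht))).deriv,
    (hu.riccati_add_halphen (hasDerivAt_of_deriv hA2 (hDH2 t ht))).deriv,
    (hu.riccati_add_halphen (hasDerivAt_of_deriv hA3 (hDH3 t ht))).deriv⟩
end

section
/- Let t1, t2, t3 ∈ ℂ be pairwise distinct. For each cyclic permutation (i, j, k) of (1, 2, 3) let M_i be the 2×2 matrix [[−t_i, 1], [t_j t_k − t_i(t_j + t_k), t_i]]. Then the vector (v1, v2, v3) = (t1(t2+t3) − t2t3, t2(t1+t3) − t1t3, t3(t1+t2) − t1t2) is the unique vector in ℂ³ satisfying Σ_{i=1}^{3} (v_i / (2 (t_i − t_j)(t_i − t_k))) · M_i = [[0, −1], [0, 0]], where for each i the indices j, k are the two elements of {1,2,3} \ {i}. -/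
/-!
Write `w_i = v_i / (2 (t_i - t_j)(t_i - t_k))`. Since the first row of `M_i` is `(-t_i, 1)` and its
`(1,0)` entry is `σ₂ - 2 σ₁ t_i + 2 t_i²`, the matrix equation says exactly that the first three
moments of `w` at the nodes `t_i` are `Σ w_i = -1`, `Σ w_i t_i = 0`, `Σ w_i t_i² = σ₂ / 2`.
This is a Vandermonde system, uniquely solvable because the `t_i` are distinct, and the
Darboux–Halphen vector solves it.
-/

open Matrix

theorem vec3_injective {α : Type*} {a b c : α} (hab : a ≠ b) (hac : a ≠ c) (hbc : b ≠ c) :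
    Function.Injective ![a, b, c] := by
  intro i j
  fin_cases i <;> fin_cases j <;> simp [hab, hac, hbc, hab.symm, hac.symm, hbc.symm]

theorem vecMul_vandermonde_injective {R : Type*} [CommRing R] [IsDomain R] {n : ℕ}
    {t : Fin n → R} (ht : Function.Injective t) :
    Function.Injective fun w : Fin n → R => w ᵥ* vandermonde t := fun w w' h =>
  sub_eq_zero.mp <| eq_zero_of_vecMul_eq_zero (det_vandermonde_ne_zero_iff.mpr ht) <| by
    rw [sub_vecMul]; exact sub_eq_zero.mpr h

section

variable {K : Type*} [Field K]

def gaussManinMatrix (ti tj tk : K) : Matrix (Fin 2) (Fin 2) K :=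
  !![-ti, 1; tj * tk - ti * (tj + tk), ti]

theorem smul_gaussManinMatrix_sum_eq_iff_vecMul_vandermonde (h2 : (2 : K) ≠ 0)
    (t1 t2 t3 w1 w2 w3 : K) :
    w1 • gaussManinMatrix t1 t2 t3 + w2 • gaussManinMatrix t2 t1 t3 +
        w3 • gaussManinMatrix t3 t1 t2 = !![0, -1; 0, 0] ↔
      ![w1, w2, w3] ᵥ* vandermonde ![t1, t2, t3] =
        ![-1, 0, (t1 * t2 + t1 * t3 + t2 * t3) / 2] := by
  rw [← Matrix.ext_iff, funext_iff]
  simp only [gaussManinMatrix, smul_of, smul_cons, smul_eq_mul, mul_neg, mul_one, smul_empty,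
    of_add_of, add_cons, head_cons, tail_cons, empty_add_empty, of_apply, cons_val', cons_val_fin_one,
    Fin.forall_fin_succ, Fin.isValue, cons_val_zero, cons_val_succ, forall_const, vecMul, dotProduct,
    vandermonde_apply, Fin.sum_univ_three, cons_val_one, cons_val, Fin.coe_ofNat_eq_mod,
    Nat.zero_mod, pow_zero, Fin.val_succ, zero_add, pow_one, Fin.val_eq_zero]
  constructor
  · rintro ⟨⟨-, hsum⟩, hquad, hlin⟩
    refine ⟨hsum, hlin, ?_⟩
    field_simp
    linear_combination hquad - (t1 * t2 + t1 * t3 + t2 * t3) * hsum + 2 * (t1 + t2 + t3) * hlin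
  · rintro ⟨hsum, hlin, hquad⟩
    field_simp at hquad
    refine ⟨⟨by linear_combination -hlin, hsum⟩, ?_, hlin⟩
    linear_combination hquad + (t1 * t2 + t1 * t3 + t2 * t3) * hsum - 2 * (t1 + t2 + t3) * hlin

theorem darbouxHalphen_div_vecMul_vandermonde (h2 : (2 : K) ≠ 0) {t1 t2 t3 : K}
    (h12 : t1 ≠ t2) (h13 : t1 ≠ t3) (h23 : t2 ≠ t3) :
    ![(t1 * (t2 + t3) - t2 * t3) / (2 * (t1 - t2) * (t1 - t3)),
        (t2 * (t1 + t3) - t1 * t3) / (2 * (t2 - t1) * (t2 - t3)),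
        (t3 * (t1 + t2) - t1 * t2) / (2 * (t3 - t1) * (t3 - t2))] ᵥ* vandermonde ![t1, t2, t3] =
      ![-1, 0, (t1 * t2 + t1 * t3 + t2 * t3) / 2] := by
  ext k
  fin_cases k <;>
    simp only [vecMul, dotProduct, Fin.sum_univ_three, vandermonde_apply, Fin.isValue,
      Fin.zero_eta, Fin.mk_one, Fin.reduceFinMk, Fin.coe_ofNat_eq_mod, Nat.zero_mod, Nat.one_mod,
      Nat.mod_succ, pow_zero, pow_one, mul_one, cons_val_zero, cons_val_one, cons_val] <;>
    field_simp <;> ring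

theorem vec3_div_eq_vec3_div_iff {d0 d1 d2 : K} (h0 : d0 ≠ 0) (h1 : d1 ≠ 0) (h2 : d2 ≠ 0)
    (v : Fin 3 → K) (a0 a1 a2 : K) :
    ![v 0 / d0, v 1 / d1, v 2 / d2] = ![a0 / d0, a1 / d1, a2 / d2] ↔ v = ![a0, a1, a2] := by
  simp only [← List.ofFn_inj, List.ofFn_succ, List.ofFn_zero]
  simp [div_left_inj', h0, h1, h2]

end

/-- The Darboux–Halphen vector field is the unique vector field contracting the
Gauss–Manin connection matrix of the family y² = 4(x−t₁)(x−t₂)(x−t₃) to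
[[0, −1], [0, 0]]. -/
theorem gauss_manin_in_disguise_unique
    (t1 t2 t3 : ℂ) (h12 : t1 ≠ t2) (h13 : t1 ≠ t3) (h23 : t2 ≠ t3) :
    ∀ v : Fin 3 → ℂ,
      ((v 0 / (2 * (t1 - t2) * (t1 - t3))) •
          (!![-t1, 1; t2 * t3 - t1 * (t2 + t3), t1] : Matrix (Fin 2) (Fin 2) ℂ) +
        (v 1 / (2 * (t2 - t1) * (t2 - t3))) •
          (!![-t2, 1; t1 * t3 - t2 * (t1 + t3), t2] : Matrix (Fin 2) (Fin 2) ℂ) +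
        (v 2 / (2 * (t3 - t1) * (t3 - t2))) •
          (!![-t3, 1; t1 * t2 - t3 * (t1 + t2), t3] : Matrix (Fin 2) (Fin 2) ℂ)
        = !![0, -1; 0, 0]) ↔
      v = ![t1 * (t2 + t3) - t2 * t3, t2 * (t1 + t3) - t1 * t3, t3 * (t1 + t2) - t1 * t2] := by
  intro v
  have hden {a b c : ℂ} (hab : a ≠ b) (hac : a ≠ c) : 2 * (a - b) * (a - c) ≠ 0 := by
    simp [sub_eq_zero, hab, hac]
  refine (smul_gaussManinMatrix_sum_eq_iff_vecMul_vandermonde two_ne_zero t1 t2 t3 _ _ _).trans ?_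
  rw [← darbouxHalphen_div_vecMul_vandermonde two_ne_zero h12 h13 h23,
    (vecMul_vandermonde_injective (vec3_injective h12 h13 h23)).eq_iff]
  exact vec3_div_eq_vec3_div_iff (hden h12 h13) (hden h12.symm h23) (hden h13.symm h23.symm) _ _ _ _
end

section
/- Let γ : V → ℂ be a three-times differentiable function on an open set V ⊆ ℂ and define f(x, y) = −(x⁴/16)·γ(y). Then f satisfies the WDVV associativity equation f_xxy² = f_yyy + f_xxx·f_xyy at all points (x, y) with x ≠ 0 and y ∈ V if and only if γ satisfies the Chazy equation γ''' = 6 γ γ'' − 9 (γ')² on V. -/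
private lemma lc2 (c : ℂ) (g : ℂ → ℂ) (y : ℂ) :
    iteratedDeriv 2 (fun t => c * g t) y = c * iteratedDeriv 2 g y := by
  simp [iteratedDeriv_succ', deriv_const_mul_field']

private lemma lc3 (c : ℂ) (g : ℂ → ℂ) (y : ℂ) :
    iteratedDeriv 3 (fun t => c * g t) y = c * iteratedDeriv 3 g y := by
  simp [iteratedDeriv_succ', deriv_const_mul_field']

private lemma l1 (c x : ℂ) : deriv (fun t : ℂ => c * t^4) x = c * (4*x^3) := by
  simp [deriv_const_mul_field]

private lemma l2 (c x : ℂ) : iteratedDeriv 2 (fun t : ℂ => c * t^4) x = c * (12*x^2) := by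
  simp [iteratedDeriv_succ', deriv_const_mul_field']

private lemma l3 (c x : ℂ) : iteratedDeriv 3 (fun t : ℂ => c * t^4) x = c * (24*x) := by
  simp [iteratedDeriv_succ', deriv_const_mul_field']

/-- For f(x,y) = −(x⁴/16)·γ(y), the WDVV associativity equation
f_xxy² = f_yyy + f_xxx·f_xyy (at all points with x ≠ 0, y ∈ V) is equivalent to the
Chazy equation γ''' = 6γγ'' − 9(γ')² on V. -/
theorem wdvv_iff_chazy
    (V : Set ℂ) (hV : IsOpen V)
    (γ : ℂ → ℂ)
    (hγ : DifferentiableOn ℂ γ V)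
    (hγ' : DifferentiableOn ℂ (deriv γ) V)
    (hγ'' : DifferentiableOn ℂ (deriv (deriv γ)) V)
    (f : ℂ → ℂ → ℂ) (hf : ∀ x y, f x y = -(x^4 / 16) * γ y) :
    (∀ x : ℂ, x ≠ 0 → ∀ y ∈ V,
      (deriv (fun y' => iteratedDeriv 2 (fun x' => f x' y') x) y)^2 =
        iteratedDeriv 3 (fun y' => f x y') y +
          iteratedDeriv 3 (fun x' => f x' y) x *
            iteratedDeriv 2 (fun y' => deriv (fun x' => f x' y') x) y) ↔
    (∀ y ∈ V,
      iteratedDeriv 3 γ y = 6 * γ y * iteratedDeriv 2 γ y - 9 * (deriv γ y)^2) := by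
  have key : ∀ x : ℂ, ∀ y : ℂ,
      ((deriv (fun y' => iteratedDeriv 2 (fun x' => f x' y') x) y)^2 =
        iteratedDeriv 3 (fun y' => f x y') y +
          iteratedDeriv 3 (fun x' => f x' y) x *
            iteratedDeriv 2 (fun y' => deriv (fun x' => f x' y') x) y) ↔
      (((-(3/4:ℂ) * x^2) * deriv γ y)^2 =
        -(x^4/16) * iteratedDeriv 3 γ y +
          ((-(γ y)/16) * (24*x)) * ((-(x^3)/4) * iteratedDeriv 2 γ y)) := by
    intro x y
    have hx4 : ∀ y' : ℂ, (fun x' => f x' y') = fun x' : ℂ => (-(γ y')/16) * x'^4 := by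
      intro y'; funext t; rw [hf]; ring
    have e1 : (fun y' => iteratedDeriv 2 (fun x' => f x' y') x)
        = fun y' => (-(3/4:ℂ) * x^2) * γ y' := by
      funext y'; rw [hx4 y', l2]; ring
    have e2 : (fun y' => f x y') = fun y' => -(x^4/16) * γ y' := by
      funext y'; exact hf x y'
    have e4 : (fun y' => deriv (fun x' => f x' y') x)
        = fun y' => (-(x^3)/4) * γ y' := by
      funext y'; rw [hx4 y', l1]; ring
    rw [e1, e2, e4, hx4 y, l3, lc3, lc2, deriv_const_mul_field]
  constructor
  · intro h y hy
    have h1 := (key 1 y).mp (h 1 one_ne_zero y hy)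
    linear_combination (16 : ℂ) * h1
  · intro h x hx y hy
    refine (key x y).mpr ?_
    linear_combination (x^4/16) * h y hy
end
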